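/- arXiv:2106.08414 — 2 statements merged into one kernel-verified Lean document; each statement's English description precedes it below -/
import Mathlib

section
/- Under the hypotheses of the constant-step-size policy gradient bound—(Ω, ℱ, ℙ) with filtration (ℱ_k), J : ℝ^d → ℝ differentiable, bounded, J ≤ J*, satisfying |J(x) − J(y) − ⟨∇J(y), x−y⟩| ≤ M_J(‖x−y‖^{1+β} + ‖x−y‖² + λ‖x−y‖); iterates θ_{k+1} = θ_k + η g_k with 𝔼[g_k|ℱ_k] = ∇J(θ_k) and conditional moment bounds 𝔼[‖g_k‖|ℱ_k] ≤ D₁, 𝔼[‖g_k‖^{1+β}|ℱ_k] ≤ D_{1+β}, 𝔼[‖g_k‖²|ℱ_k] ≤ D₂ almost surely—set L := M_J·max{D₁, D_{1+β}, D₂} and assume L > 0 and J* > J(θ₀). Fix K ∈ ℕ with K ≥ (J* − J(θ₀))/(2L), and choose the constant step size η := ((J* − J(θ₀))/(2L))^{1/(1+β)}·K^{−1/(1+β)} (so that η ≤ 1). Then (1/K)·Σ_{k=0}^{K−1} 𝔼[‖∇J(θ_k)‖²] ≤ 2·(2L)^{1/(1+β)}·(J* − J(θ₀))^{β/(1+β)}·K^{−β/(1+β)}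 + L·λ. -/
/-!
By the smoothness inequality, one step `θ ↦ θ + η g` raises `𝔼 J` by at least
`η 𝔼⟪∇J(θ), g⟫ - M_J (η^{1+β} 𝔼‖g‖^{1+β} + η² 𝔼‖g‖² + λ η 𝔼‖g‖)`. Since `∇J(θ_k) = 𝔼[g_k | ℱ_k]`
is `ℱ_k`-measurable, pulling it out of the conditional expectation gives
`𝔼⟪∇J(θ_k), g_k⟫ = 𝔼‖∇J(θ_k)‖²`, and `η ≤ 1` absorbs `η²` into `η^{1+β}`. Telescoping over `K`
steps against `J ≤ J*` yields `η Σ 𝔼‖∇J(θ_k)‖² ≤ (J* - J(θ₀)) + K L (2 η^{1+β} + λ η)`, and the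
tuned step size is exactly the one with `2 L K η^{1+β} = J* - J(θ₀)`, which balances the two terms.
-/

open MeasureTheory
open scoped RealInnerProductSpace

section ConditionalExpectation

variable {Ω E : Type*} {m m0 : MeasurableSpace Ω} {μ : Measure Ω}

theorem integral_le_of_ae_condExp_le [IsProbabilityMeasure μ] (hm : m ≤ m0) {f : Ω → ℝ} {D : ℝ}
    (hD : ∀ᵐ ω ∂μ, μ[f|m] ω ≤ D) : ∫ ω, f ω ∂μ ≤ D :=
  calc ∫ ω, f ω ∂μ = ∫ ω, μ[f|m] ω ∂μ := (integral_condExp hm).symm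
    _ ≤ ∫ _, D ∂μ := integral_mono_ae integrable_condExp (integrable_const D) hD
    _ = D := by simp

variable [NormedAddCommGroup E] [InnerProductSpace ℝ E] [CompleteSpace E]

theorem integrable_inner_of_condExp_ae_eq [IsFiniteMeasure μ] {g v : Ω → E} (hg : MemLp g 2 μ)
    (hv : μ[g|m] =ᵐ[μ] v) : Integrable (fun ω => ⟪v ω, g ω⟫) μ :=
  memLp_one_iff_integrable.1 <|
    (innerSL ℝ).memLp_of_bilin 1 ((hg.condExp (by norm_num)).ae_eq hv) hg

-- `v` is `m`-measurable up to a null set, so it can be pulled out of `𝔼[⟪v, g⟫ | m]`.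
theorem integral_inner_eq_integral_norm_sq_of_condExp_ae_eq [IsFiniteMeasure μ] (hm : m ≤ m0)
    {g v : Ω → E} (hg : MemLp g 2 μ) (hv : μ[g|m] =ᵐ[μ] v) :
    ∫ ω, ⟪v ω, g ω⟫ ∂μ = ∫ ω, ‖v ω‖ ^ 2 ∂μ := by
  have hv_meas : AEStronglyMeasurable[m] v μ := ⟨_, stronglyMeasurable_condExp, hv.symm⟩
  have hpull : μ[fun ω => ⟪v ω, g ω⟫|m] =ᵐ[μ] fun ω => ⟪v ω, μ[g|m] ω⟫ :=
    condExp_bilin_of_aestronglyMeasurable_left (innerSL ℝ) hv_meas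
      (integrable_inner_of_condExp_ae_eq hg hv) (hg.integrable (by norm_num))
  calc ∫ ω, ⟪v ω, g ω⟫ ∂μ = ∫ ω, μ[fun ω => ⟪v ω, g ω⟫|m] ω ∂μ := (integral_condExp hm).symm
    _ = ∫ ω, ‖v ω‖ ^ 2 ∂μ := by
      refine integral_congr_ae ?_
      filter_upwards [hpull, hv] with ω h_pull h_v
      rw [h_pull, h_v, real_inner_self_eq_norm_sq]

end ConditionalExpectation

theorem Continuous.integrable_comp_of_abs_le {Ω E : Type*} [TopologicalSpace E]
    {m0 : MeasurableSpace Ω} {μ : Measure Ω} [IsFiniteMeasure μ] {J : E → ℝ} (hJ : Continuous J)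
    {C : ℝ} (hC : ∀ y, |J y| ≤ C) {x : Ω → E} (hx : AEStronglyMeasurable x μ) :
    Integrable (fun ω => J (x ω)) μ :=
  .of_bound (hJ.comp_aestronglyMeasurable hx) C (ae_of_all _ fun _ => hC _)

section HolderSmooth

variable {E : Type*} [NormedAddCommGroup E] [InnerProductSpace ℝ E]

def HolderSmooth (J : E → ℝ) (J' : E → E) (M β lam : ℝ) : Prop :=
  ∀ x y, |J x - J y - ⟪J' y, x - y⟫| ≤ M * (‖x - y‖ ^ (1 + β) + ‖x - y‖ ^ 2 + lam * ‖x - y‖)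

variable {J : E → ℝ} {J' : E → E} {M β lam η : ℝ}

theorem HolderSmooth.mul_inner_le (hJ : HolderSmooth J J' M β lam) (x u : E) (hη : 0 ≤ η) :
    η * ⟪J' x, u⟫ ≤ J (x + η • u) - J x
      + M * (η ^ (1 + β) * ‖u‖ ^ (1 + β) + η ^ 2 * ‖u‖ ^ 2 + lam * η * ‖u‖) := by
  have h := (abs_le.1 (hJ (x + η • u) x)).1
  rw [add_sub_cancel_left, norm_smul, Real.norm_of_nonneg hη, real_inner_smul_right,
    Real.mul_rpow hη (norm_nonneg u), mul_pow] at h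
  linarith

variable {Ω : Type*} {m m0 : MeasurableSpace Ω} {μ : Measure Ω} [IsFiniteMeasure μ]
  {Jmax : ℝ} {x g : Ω → E}

theorem HolderSmooth.integral_mul_inner_le (hJ : HolderSmooth J J' M β lam) (hJc : Continuous J)
    (hJbdd : ∀ y, |J y| ≤ Jmax) (hβ₀ : 0 < 1 + β) (hβ₁ : β ≤ 1) (hη : 0 ≤ η)
    (hx : AEStronglyMeasurable x μ) (hg : MemLp g 2 μ)
    (hinner : Integrable (fun ω => ⟪J' (x ω), g ω⟫) μ) :
    η * ∫ ω, ⟪J' (x ω), g ω⟫ ∂μ ≤ ∫ ω, J (x ω + η • g ω) ∂μ - ∫ ω, J (x ω) ∂μ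
      + M * (η ^ (1 + β) * ∫ ω, ‖g ω‖ ^ (1 + β) ∂μ + η ^ 2 * ∫ ω, ‖g ω‖ ^ 2 ∂μ
        + lam * η * ∫ ω, ‖g ω‖ ∂μ) := by
  have hJx := hJc.integrable_comp_of_abs_le hJbdd hx
  have hJx' : Integrable (fun ω => J (x ω + η • g ω)) μ :=
    hJc.integrable_comp_of_abs_le hJbdd (hx.add (hg.aestronglyMeasurable.const_smul η))
  have hg1 : Integrable (fun ω => ‖g ω‖) μ := (hg.integrable (by norm_num)).norm
  have hg2 : Integrable (fun ω => ‖g ω‖ ^ 2) μ := hg.integrable_norm_pow (by norm_num)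
  have hg1β : Integrable (fun ω => ‖g ω‖ ^ (1 + β)) μ := by
    have hp : ENNReal.ofReal (1 + β) ≤ 2 := by
      rw [ENNReal.ofReal_le_iff_le_toReal (by norm_num)]; norm_num; linarith
    simpa [ENNReal.toReal_ofReal hβ₀.le] using
      (hg.mono_exponent hp).integrable_norm_rpow (by simpa using hβ₀) ENNReal.ofReal_ne_top
  have hΔ : Integrable (fun ω => J (x ω + η • g ω) - J (x ω)) μ := hJx'.sub hJx
  have hpen : Integrable (fun ω => η ^ (1 + β) * ‖g ω‖ ^ (1 + β) + η ^ 2 * ‖g ω‖ ^ 2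
      + lam * η * ‖g ω‖) μ := by fun_prop
  calc η * ∫ ω, ⟪J' (x ω), g ω⟫ ∂μ = ∫ ω, η * ⟪J' (x ω), g ω⟫ ∂μ := (integral_const_mul _ _).symm
    _ ≤ ∫ ω, (J (x ω + η • g ω) - J (x ω) + M * (η ^ (1 + β) * ‖g ω‖ ^ (1 + β)
          + η ^ 2 * ‖g ω‖ ^ 2 + lam * η * ‖g ω‖)) ∂μ :=
      integral_mono (hinner.const_mul η) (hΔ.add (hpen.const_mul M)) fun ω => hJ.mul_inner_le _ _ hη
    _ = _ := by
      rw [integral_add hΔ (hpen.const_mul M), integral_sub hJx' hJx, integral_const_mul,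
        integral_add (by fun_prop) (by fun_prop), integral_add (by fun_prop) (by fun_prop),
        integral_const_mul, integral_const_mul, integral_const_mul]

theorem HolderSmooth.integral_norm_sq_le [CompleteSpace E] (hm : m ≤ m0)
    (hJ : HolderSmooth J J' M β lam) (hJc : Continuous J) (hJbdd : ∀ y, |J y| ≤ Jmax)
    (hM : 0 ≤ M) (hβ₀ : 0 < 1 + β) (hβ₁ : β ≤ 1) (hlam : 0 ≤ lam) (hη₀ : 0 ≤ η) (hη₁ : η ≤ 1)
    (hx : AEStronglyMeasurable x μ) (hg : MemLp g 2 μ)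
    (hmean : μ[g|m] =ᵐ[μ] fun ω => J' (x ω)) {D : ℝ} (hD₁ : ∫ ω, ‖g ω‖ ∂μ ≤ D)
    (hD1β : ∫ ω, ‖g ω‖ ^ (1 + β) ∂μ ≤ D) (hD₂ : ∫ ω, ‖g ω‖ ^ 2 ∂μ ≤ D) :
    η * ∫ ω, ‖J' (x ω)‖ ^ 2 ∂μ ≤ ∫ ω, J (x ω + η • g ω) ∂μ - ∫ ω, J (x ω) ∂μ
      + M * D * (2 * η ^ (1 + β) + lam * η) := by
  have hη_sq : η ^ 2 ≤ η ^ (1 + β) := by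
    rw [← Real.rpow_two]
    exact Real.rpow_le_rpow_of_exponent_ge' hη₀ hη₁ hβ₀.le (by linarith)
  have hpen : η ^ (1 + β) * ∫ ω, ‖g ω‖ ^ (1 + β) ∂μ + η ^ 2 * ∫ ω, ‖g ω‖ ^ 2 ∂μ
      + lam * η * ∫ ω, ‖g ω‖ ∂μ ≤ D * (2 * η ^ (1 + β) + lam * η) := by
    have h1β := mul_le_mul_of_nonneg_left hD1β (Real.rpow_nonneg hη₀ (1 + β))
    have h2 := mul_le_mul hη_sq hD₂ (integral_nonneg fun ω => by positivity)
      (Real.rpow_nonneg hη₀ (1 + β))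
    have h1 := mul_le_mul_of_nonneg_left hD₁ (mul_nonneg hlam hη₀)
    linarith
  rw [← integral_inner_eq_integral_norm_sq_of_condExp_ae_eq hm hg hmean]
  calc _ ≤ _ := hJ.integral_mul_inner_le hJc hJbdd hβ₀ hβ₁ hη₀ hx hg
        (integrable_inner_of_condExp_ae_eq hg hmean)
    _ ≤ _ := by rw [mul_assoc M]; gcongr

end HolderSmooth

theorem sum_range_le_sub_add_mul {a s : ℕ → ℝ} {C : ℝ} (h : ∀ k, s k ≤ a (k + 1) - a k + C)
    (n : ℕ) : ∑ k ∈ Finset.range n, s k ≤ a n - a 0 + n * C :=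
  calc ∑ k ∈ Finset.range n, s k ≤ ∑ k ∈ Finset.range n, (a (k + 1) - a k + C) :=
        Finset.sum_le_sum fun k _ => h k
    _ = a n - a 0 + n * C := by
      rw [Finset.sum_add_distrib, Finset.sum_range_sub, Finset.sum_const, Finset.card_range,
        nsmul_eq_mul]

section TunedStep

variable {G A K β η : ℝ}

theorem tuned_step_eq (hG : 0 ≤ G) (hA : 0 ≤ A) (hK : 0 ≤ K)
    (hη : η = (G / A) ^ ((1 : ℝ) / (1 + β)) * K ^ (-(1 : ℝ) / (1 + β))) :
    η = (G / (A * K)) ^ ((1 : ℝ) / (1 + β)) := by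
  rw [hη, neg_div, Real.rpow_neg hK, ← div_eq_mul_inv, ← Real.div_rpow (div_nonneg hG hA) hK,
    div_div]

theorem tuned_step_le_one (hG : 0 ≤ G) (hA : 0 ≤ A) (hK : 0 < K) (hβ : 0 < 1 + β)
    (hGK : G / A ≤ K) (hη : η = (G / A) ^ ((1 : ℝ) / (1 + β)) * K ^ (-(1 : ℝ) / (1 + β))) :
    η ≤ 1 := by
  rw [tuned_step_eq hG hA hK.le hη]
  exact Real.rpow_le_one (by positivity) (by rwa [← div_div, div_le_one hK]) (by positivity)

theorem tuned_step_rpow (hG : 0 ≤ G) (hA : 0 < A) (hK : 0 < K) (hβ : 1 + β ≠ 0)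
    (hη : η = (G / A) ^ ((1 : ℝ) / (1 + β)) * K ^ (-(1 : ℝ) / (1 + β))) :
    A * K * η ^ (1 + β) = G := by
  rw [tuned_step_eq hG hA.le hK.le hη, one_div, Real.rpow_inv_rpow (by positivity) hβ]
  field_simp

theorem tuned_step_mul_rate (hG : 0 < G) (hA : 0 < A) (hK : 0 < K) (hβ : 1 + β ≠ 0)
    (hη : η = (G / A) ^ ((1 : ℝ) / (1 + β)) * K ^ (-(1 : ℝ) / (1 + β))) :
    K * (η * (A ^ ((1 : ℝ) / (1 + β)) * G ^ (β / (1 + β)) * K ^ (-β / (1 + β)))) = G := by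
  have hA_cancel : η * A ^ ((1 : ℝ) / (1 + β)) = (G / K) ^ ((1 : ℝ) / (1 + β)) := by
    rw [tuned_step_eq hG.le hA.le hK.le hη, ← Real.mul_rpow (by positivity) hA.le]
    congr 1
    field_simp
  have hrate : G ^ (β / (1 + β)) * K ^ (-β / (1 + β)) = (G / K) ^ (β / (1 + β)) := by
    rw [neg_div, Real.rpow_neg hK.le, ← div_eq_mul_inv, Real.div_rpow hG.le hK.le]
  calc _ = K * ((G / K) ^ ((1 : ℝ) / (1 + β)) * (G / K) ^ (β / (1 + β))) := by
        rw [← hA_cancel, ← hrate]; ring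
    _ = G := by
      rw [← Real.rpow_add (by positivity), ← add_div, div_self hβ, Real.rpow_one]
      field_simp

end TunedStep

theorem stmt8_general {Ω : Type*} {m0 : MeasurableSpace Ω} (P : Measure Ω) [IsProbabilityMeasure P]
    (ℱ : Filtration ℕ m0)
    (d : ℕ) (MJ β lam η Jstar D₁ D1β D₂ Jmax L : ℝ) (K : ℕ)
    (hMJ : 0 ≤ MJ) (hβ : β ∈ Set.Ioc (0 : ℝ) 1) (hlam : 0 ≤ lam)
    (J : EuclideanSpace ℝ (Fin d) → ℝ)
    (J' : EuclideanSpace ℝ (Fin d) → EuclideanSpace ℝ (Fin d))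
    (hJdiff : ∀ x, HasGradientAt J (J' x) x)
    (hJbdd : ∀ x, |J x| ≤ Jmax)
    (hJub : ∀ x, J x ≤ Jstar)
    (hsmooth : ∀ x y : EuclideanSpace ℝ (Fin d),
      |J x - J y - ⟪J' y, x - y⟫|
        ≤ MJ * (‖x - y‖ ^ (1 + β) + ‖x - y‖ ^ 2 + lam * ‖x - y‖))
    (θ0 : EuclideanSpace ℝ (Fin d))
    (θ : ℕ → Ω → EuclideanSpace ℝ (Fin d))
    (g : ℕ → Ω → EuclideanSpace ℝ (Fin d))
    (hθ0 : ∀ ω, θ 0 ω = θ0)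
    (hθrec : ∀ k ω, θ (k + 1) ω = θ k ω + η • g k ω)
    (hgL2 : ∀ k, MemLp (g k) 2 P)
    (hgmean : ∀ k, P[g k | ℱ k] =ᵐ[P] fun ω => J' (θ k ω))
    (hg1 : ∀ k, ∀ᵐ ω ∂P, (P[fun ω' => ‖g k ω'‖ | ℱ k]) ω ≤ D₁)
    (hg1β : ∀ k, ∀ᵐ ω ∂P, (P[fun ω' => ‖g k ω'‖ ^ (1 + β) | ℱ k]) ω ≤ D1β)
    (hg2 : ∀ k, ∀ᵐ ω ∂P, (P[fun ω' => ‖g k ω'‖ ^ 2 | ℱ k]) ω ≤ D₂)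
    (hL : L = MJ * max D₁ (max D1β D₂)) (hLpos : 0 < L)
    (hgap : J θ0 < Jstar)
    (hK : (Jstar - J θ0) / (2 * L) ≤ (K : ℝ))
    (hηdef : η = ((Jstar - J θ0) / (2 * L)) ^ ((1 : ℝ) / (1 + β)) *
      (K : ℝ) ^ (-(1 : ℝ) / (1 + β))) :
    (1 / (K : ℝ)) * ∑ k ∈ Finset.range K, ∫ ω, ‖J' (θ k ω)‖ ^ 2 ∂P
      ≤ 2 * (2 * L) ^ ((1 : ℝ) / (1 + β)) * (Jstar - J θ0) ^ (β / (1 + β)) *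
          (K : ℝ) ^ (-β / (1 + β)) + L * lam := by
  obtain ⟨hβ₀, hβ₁⟩ := hβ
  have hG : 0 < Jstar - J θ0 := sub_pos.2 hgap
  have hK_pos : 0 < (K : ℝ) := (div_pos hG (by positivity)).trans_le hK
  have hβ_pos : 0 < 1 + β := by linarith
  have hη₀ : 0 < η := by rw [hηdef]; positivity
  have hη₁ := tuned_step_le_one hG.le (by positivity) hK_pos hβ_pos hK hηdef
  have hJc : Continuous J :=
    continuous_iff_continuousAt.2 fun x => (hJdiff x).hasFDerivAt.continuousAt
  have hθ_meas : ∀ k, AEStronglyMeasurable (θ k) P := by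
    intro k
    induction k with
    | zero => rw [funext hθ0]; exact aestronglyMeasurable_const
    | succ k ih => rw [funext (hθrec k)]; exact ih.add ((hgL2 k).aestronglyMeasurable.const_smul η)
  have hstep : ∀ k, η * ∫ ω, ‖J' (θ k ω)‖ ^ 2 ∂P ≤ ∫ ω, J (θ (k + 1) ω) ∂P - ∫ ω, J (θ k ω) ∂P
      + L * (2 * η ^ (1 + β) + lam * η) := by
    intro k
    simp only [hθrec, hL]
    exact HolderSmooth.integral_norm_sq_le (ℱ.le k) hsmooth hJc hJbdd hMJ hβ_pos hβ₁ hlam hη₀.le hη₁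
      (hθ_meas k) (hgL2 k) (hgmean k)
      (integral_le_of_ae_condExp_le (ℱ.le k) ((hg1 k).mono fun _ h => le_max_of_le_left h))
      (integral_le_of_ae_condExp_le (ℱ.le k) ((hg1β k).mono fun _ h =>
        le_max_of_le_right (le_max_of_le_left h)))
      (integral_le_of_ae_condExp_le (ℱ.le k) ((hg2 k).mono fun _ h =>
        le_max_of_le_right (le_max_of_le_right h)))
  have hJ_end : ∫ ω, J (θ K ω) ∂P ≤ Jstar :=
    (integral_mono (hJc.integrable_comp_of_abs_le hJbdd (hθ_meas K)) (integrable_const _)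
      fun _ => hJub _).trans_eq (by simp)
  have hsum := sum_range_le_sub_add_mul (a := fun k => ∫ ω, J (θ k ω) ∂P) hstep K
  simp only [← Finset.mul_sum, hθ0, integral_const, probReal_univ, one_smul] at hsum
  have hS : ∑ k ∈ Finset.range K, ∫ ω, ‖J' (θ k ω)‖ ^ 2 ∂P ≤ K * (2 * ((2 * L) ^ ((1 : ℝ) / (1 + β))
      * (Jstar - J θ0) ^ (β / (1 + β)) * (K : ℝ) ^ (-β / (1 + β))) + L * lam) := by
    refine le_of_mul_le_mul_left ?_ hη₀
    linarith only [hsum, hJ_end, tuned_step_rpow hG.le (by positivity) hK_pos hβ_pos.ne' hηdef,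
      tuned_step_mul_rate hG (by positivity) hK_pos hβ_pos.ne' hηdef]
  rw [one_div, inv_mul_le_iff₀ hK_pos]
  exact hS.trans_eq (by ring)

/-- The paper's Theorem 1 (tuned constant step size): with
`L = M_J max{D₁, D_{1+β}, D₂} > 0`, `J* > J(θ₀)`, `K ≥ (J*-J(θ₀))/(2L)` and
`η = ((J*-J(θ₀))/(2L))^{1/(1+β)} K^{-1/(1+β)}`, the averaged expected squared
gradient norm obeys
`(1/K) Σ 𝔼‖∇J(θ_k)‖² ≤ 2 (2L)^{1/(1+β)} (J*-J(θ₀))^{β/(1+β)} K^{-β/(1+β)} + Lλ`. -/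
theorem stmt8 {Ω : Type*} {m0 : MeasurableSpace Ω} (P : Measure Ω) [IsProbabilityMeasure P]
    (ℱ : Filtration ℕ m0)
    (d : ℕ) (MJ β lam η Jstar D₁ D1β D₂ Jmax L : ℝ) (K : ℕ)
    (hMJ : 0 ≤ MJ) (hβ : β ∈ Set.Ioc (0 : ℝ) 1) (hlam : 0 ≤ lam)
    (hD₁ : 0 ≤ D₁) (hD1β : 0 ≤ D1β) (hD₂ : 0 ≤ D₂)
    (J : EuclideanSpace ℝ (Fin d) → ℝ)
    (J' : EuclideanSpace ℝ (Fin d) → EuclideanSpace ℝ (Fin d))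
    (hJdiff : ∀ x, HasGradientAt J (J' x) x)
    (hJbdd : ∀ x, |J x| ≤ Jmax)
    (hJub : ∀ x, J x ≤ Jstar)
    (hsmooth : ∀ x y : EuclideanSpace ℝ (Fin d),
      |J x - J y - ⟪J' y, x - y⟫|
        ≤ MJ * (‖x - y‖ ^ (1 + β) + ‖x - y‖ ^ 2 + lam * ‖x - y‖))
    (θ0 : EuclideanSpace ℝ (Fin d))
    (θ : ℕ → Ω → EuclideanSpace ℝ (Fin d))
    (g : ℕ → Ω → EuclideanSpace ℝ (Fin d))
    (hθ0 : ∀ ω, θ 0 ω = θ0)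
    (hθrec : ∀ k ω, θ (k + 1) ω = θ k ω + η • g k ω)
    (hgadapt : ∀ k, Measurable[ℱ (k + 1)] (g k))
    (hgL2 : ∀ k, MemLp (g k) 2 P)
    (hgmean : ∀ k, P[g k | ℱ k] =ᵐ[P] fun ω => J' (θ k ω))
    (hg1 : ∀ k, ∀ᵐ ω ∂P, (P[fun ω' => ‖g k ω'‖ | ℱ k]) ω ≤ D₁)
    (hg1β : ∀ k, ∀ᵐ ω ∂P, (P[fun ω' => ‖g k ω'‖ ^ (1 + β) | ℱ k]) ω ≤ D1β)
    (hg2 : ∀ k, ∀ᵐ ω ∂P, (P[fun ω' => ‖g k ω'‖ ^ 2 | ℱ k]) ω ≤ D₂)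
    (hL : L = MJ * max D₁ (max D1β D₂)) (hLpos : 0 < L)
    (hgap : J θ0 < Jstar)
    (hK : (Jstar - J θ0) / (2 * L) ≤ (K : ℝ))
    (hηdef : η = ((Jstar - J θ0) / (2 * L)) ^ ((1 : ℝ) / (1 + β)) *
      (K : ℝ) ^ (-(1 : ℝ) / (1 + β))) :
    (1 / (K : ℝ)) * ∑ k ∈ Finset.range K, ∫ ω, ‖J' (θ k ω)‖ ^ 2 ∂P
      ≤ 2 * (2 * L) ^ ((1 : ℝ) / (1 + β)) * (Jstar - J θ0) ^ (β / (1 + β)) *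
          (K : ℝ) ^ (-β / (1 + β)) + L * lam :=
  stmt8_general P ℱ d MJ β lam η Jstar D₁ D1β D₂ Jmax L K hMJ hβ hlam J J' hJdiff hJbdd hJub hsmooth
    θ0 θ g hθ0 hθrec hgL2 hgmean hg1 hg1β hg2 hL hLpos hgap hK hηdef
end

section
/- Let α ∈ [1,2], σ > 0 and m ∈ ℝ, and set A_α := ∫_ℝ exp(−|x|^α) dx and B_α := ∫_ℝ |x|^{α−1}·exp(−|x|^α/2) dx. Let λ ∈ (0, B_α/(σ·A_α)] and define R_λ := σ·(2·log(B_α/(σ·A_α·λ)))^{1/α}. Then: (i) ∫_{{a : |a−m| ≥ R_λ}} (|a−m|^{α−1}/σ^α)·(1/(σ·A_α))·exp(−|a−m|^α/σ^α) da ≤ λ; and (ii) for every a with |a−m| ≤ R_λ, |a−m|^{α−1}/σ^α ≤ (1/σ)·(2·log(B_α/(σ·A_α·λ)))^{(α−1)/α}. -/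
/-! On the tail `|a - m| ≥ R_λ` we have `|a - m|^α / σ^α ≥ t := 2 log (B_α / (σ A_α λ))`, hence
`exp (-|a - m|^α / σ^α) ≤ e^{-t/2} exp (-|a - m|^α / (2σ^α))`. Integrating the right-hand side over
all of `ℝ` and substituting `x = (a - m) / σ` gives `σ^α B_α`, so the tail score mass is at most
`e^{-t/2} B_α / (σ A_α) = λ`. Part (ii) is monotonicity of `y ↦ y^(α-1)` for `α ≥ 1`. -/

open MeasureTheory Set Real

lemma integrable_comp_abs_of_integrableOn_Ioi {f : ℝ → ℝ} (hf : IntegrableOn f (Ioi 0)) :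
    Integrable fun x => f |x| := by
  have hIoi : IntegrableOn (fun x => f |x|) (Ioi 0) :=
    hf.congr_fun (fun x hx => by rw [abs_of_pos hx]) measurableSet_Ioi
  have hIic : IntegrableOn (fun x => f |x|) (Iic 0) := by
    rw [← Measure.map_neg_eq_self (volume : Measure ℝ),
      measurableEmbedding_neg.integrableOn_map_iff]
    simp_rw [Function.comp_def, abs_neg, neg_preimage, neg_Iic, neg_zero]
    exact (integrableOn_Ici_iff_integrableOn_Ioi).mpr hIoi
  rw [← integrableOn_univ, ← Iic_union_Ioi (a := (0 : ℝ))]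
  exact hIic.union hIoi

lemma integrable_abs_rpow_mul_exp_neg_mul_abs_rpow {s p b : ℝ} (hs : -1 < s) (hp : 0 < p)
    (hb : 0 < b) : Integrable fun x : ℝ => |x| ^ s * exp (-b * |x| ^ p) :=
  integrable_comp_abs_of_integrableOn_Ioi (integrableOn_rpow_mul_exp_neg_mul_rpow hs hp hb)

lemma setIntegral_le_integral_of_le_on {X : Type*} [MeasurableSpace X] {μ : Measure X}
    {f g : X → ℝ} {s : Set X} (hs : MeasurableSet s) (hf : ∀ x ∈ s, 0 ≤ f x)
    (hg : Integrable g μ) (hg0 : ∀ x, 0 ≤ g x) (hfg : ∀ x ∈ s, f x ≤ g x) :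
    ∫ x in s, f x ∂μ ≤ ∫ x, g x ∂μ :=
  (integral_mono_of_nonneg (ae_restrict_of_forall_mem hs hf) hg.integrableOn
    (ae_restrict_of_forall_mem hs hfg)).trans (setIntegral_le_integral hg (ae_of_all _ hg0))

lemma integral_abs_sub_rpow_mul_comp_div_rpow {σ : ℝ} (hσ : 0 < σ) (p m : ℝ) (φ : ℝ → ℝ) :
    ∫ a, |a - m| ^ (p - 1) * φ (|a - m| ^ p / σ ^ p)
      = σ ^ p * ∫ x, |x| ^ (p - 1) * φ (|x| ^ p) := by
  have hscale : ∀ a, |a - m| ^ (p - 1) * φ (|a - m| ^ p / σ ^ p)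
      = σ ^ (p - 1) * (|(a - m) / σ| ^ (p - 1) * φ (|(a - m) / σ| ^ p)) := by
    intro a
    rw [abs_div, abs_of_pos hσ, div_rpow (abs_nonneg _) hσ.le, div_rpow (abs_nonneg _) hσ.le]
    field_simp
  simp_rw [hscale]
  rw [integral_const_mul, integral_sub_right_eq_self (fun x => |x / σ| ^ (p - 1) * φ (|x / σ| ^ p)),
    Measure.integral_comp_div (fun x => |x| ^ (p - 1) * φ (|x| ^ p)), abs_of_pos hσ, smul_eq_mul,
    ← mul_assoc, ← rpow_add_one hσ.ne', sub_add_cancel]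

lemma mul_rpow_one_div_rpow {σ t : ℝ} (hσ : 0 ≤ σ) (ht : 0 ≤ t) (α q : ℝ) :
    (σ * t ^ (1 / α)) ^ q = σ ^ q * t ^ (q / α) := by
  rw [mul_rpow hσ (rpow_nonneg ht _), ← rpow_mul ht, one_div_mul_eq_div]

section ScoreBounds

variable {α σ : ℝ}

lemma score_density_le_of_tail (hα : 0 < α) (hσ : 0 < σ) {m A t a : ℝ} (hA : 0 ≤ A)
    (ht : 0 ≤ t) (ha : σ * t ^ (1 / α) ≤ |a - m|) :
    (|a - m| ^ (α - 1) / σ ^ α) * ((1 / (σ * A)) * exp (-(|a - m| ^ α) / σ ^ α))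
      ≤ exp (-(t / 2)) / (σ * A * σ ^ α)
        * (|a - m| ^ (α - 1) * exp (-(|a - m| ^ α / σ ^ α) / 2)) := by
  have htail : t ≤ |a - m| ^ α / σ ^ α := by
    have := rpow_le_rpow (by positivity) ha hα.le
    rw [mul_rpow_one_div_rpow hσ.le ht, div_self hα.ne', rpow_one] at this
    rw [le_div_iff₀ (rpow_pos_of_pos hσ α)]
    linarith
  have hexp : exp (-(|a - m| ^ α) / σ ^ α)
      ≤ exp (-(t / 2)) * exp (-(|a - m| ^ α / σ ^ α) / 2) := by
    rw [← exp_add, neg_div]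
    exact exp_le_exp.mpr (by linarith)
  calc (|a - m| ^ (α - 1) / σ ^ α) * ((1 / (σ * A)) * exp (-(|a - m| ^ α) / σ ^ α))
      = |a - m| ^ (α - 1) / (σ * A * σ ^ α) * exp (-(|a - m| ^ α) / σ ^ α) := by ring
    _ ≤ |a - m| ^ (α - 1) / (σ * A * σ ^ α)
        * (exp (-(t / 2)) * exp (-(|a - m| ^ α / σ ^ α) / 2)) := by gcongr
    _ = _ := by ring

lemma setIntegral_score_tail_le (hα : 0 < α) (hσ : 0 < σ) (m : ℝ) {A : ℝ} (hA : 0 ≤ A)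
    {t : ℝ} (ht : 0 ≤ t) :
    ∫ a in {a : ℝ | σ * t ^ (1 / α) ≤ |a - m|},
        (|a - m| ^ (α - 1) / σ ^ α) * ((1 / (σ * A)) * exp (-(|a - m| ^ α) / σ ^ α))
      ≤ exp (-(t / 2)) / (σ * A) * ∫ x, |x| ^ (α - 1) * exp (-(|x| ^ α) / 2) := by
  set h : ℝ → ℝ := fun a => |a - m| ^ (α - 1) * exp (-(|a - m| ^ α / σ ^ α) / 2)
  have hh : Integrable h := by
    refine ((integrable_abs_rpow_mul_exp_neg_mul_abs_rpow (s := α - 1) (by linarith) hα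
      (by positivity : 0 < 1 / (2 * σ ^ α))).comp_sub_right m).congr (ae_of_all _ fun a => ?_)
    simp only [h]
    rw [show -(1 / (2 * σ ^ α)) * |a - m| ^ α = -(|a - m| ^ α / σ ^ α) / 2 by ring]
  have hS : MeasurableSet {a : ℝ | σ * t ^ (1 / α) ≤ |a - m|} :=
    measurableSet_le measurable_const (measurable_id.sub_const m).abs
  calc _ ≤ ∫ a, exp (-(t / 2)) / (σ * A * σ ^ α) * h a :=
        setIntegral_le_integral_of_le_on hS (fun a _ => by positivity) (hh.const_mul _)
          (fun a => by positivity) fun a ha => score_density_le_of_tail hα hσ hA ht ha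
    _ = exp (-(t / 2)) / (σ * A) * ∫ x, |x| ^ (α - 1) * exp (-(|x| ^ α) / 2) := by
        rw [integral_const_mul,
          integral_abs_sub_rpow_mul_comp_div_rpow hσ α m fun u => exp (-u / 2)]
        field_simp

lemma abs_rpow_div_rpow_le_of_abs_le (hα : 1 ≤ α) (hσ : 0 < σ) {t y : ℝ} (ht : 0 ≤ t)
    (hy : |y| ≤ σ * t ^ (1 / α)) :
    |y| ^ (α - 1) / σ ^ α ≤ 1 / σ * t ^ ((α - 1) / α) :=
  calc |y| ^ (α - 1) / σ ^ α ≤ (σ * t ^ (1 / α)) ^ (α - 1) / σ ^ α := by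
        gcongr
    _ = 1 / σ * t ^ ((α - 1) / α) := by
        rw [mul_rpow_one_div_rpow hσ.le ht, rpow_sub_one hσ.ne']
        field_simp

end ScoreBounds

/-- Explicit instantiation of the exploration tolerance for the moderate-tailed policy:
for `λ ∈ (0, B_α/(σA_α)]` and `R_λ = σ (2 log(B_α/(σA_αλ)))^{1/α}`, the score-mass
outside `{|a-m| ≤ R_λ}` is at most `λ`, while on that set the score magnitude
`|a-m|^{α-1}/σ^α` is at most `(1/σ)(2 log(B_α/(σA_αλ)))^{(α-1)/α}`. -/
theorem stmt11 (α : ℝ) (hα : α ∈ Set.Icc (1 : ℝ) 2) (σ : ℝ) (hσ : 0 < σ) (m : ℝ)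
    (Aα Bα : ℝ)
    (hAα : Aα = ∫ x : ℝ, Real.exp (-(|x| ^ α)))
    (hBα : Bα = ∫ x : ℝ, |x| ^ (α - 1) * Real.exp (-(|x| ^ α) / 2))
    (lam : ℝ) (hlam : lam ∈ Set.Ioc (0 : ℝ) (Bα / (σ * Aα)))
    (Rlam : ℝ)
    (hRlam : Rlam = σ * (2 * Real.log (Bα / (σ * Aα * lam))) ^ ((1 : ℝ) / α)) :
    (∫ a in {a : ℝ | Rlam ≤ |a - m|},
        (|a - m| ^ (α - 1) / σ ^ α) * ((1 / (σ * Aα)) * Real.exp (-(|a - m| ^ α) / σ ^ α))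
      ≤ lam) ∧
    ∀ a : ℝ, |a - m| ≤ Rlam →
      |a - m| ^ (α - 1) / σ ^ α
        ≤ (1 / σ) * (2 * Real.log (Bα / (σ * Aα * lam))) ^ ((α - 1) / α) := by
  obtain ⟨hα1, -⟩ := hα
  obtain ⟨hlam, hlamB⟩ := hlam
  have hA : 0 < Aα := by
    refine (integral_nonneg fun x => (exp_pos _).le).trans_eq hAα.symm |>.lt_of_ne' fun h => ?_
    rw [h, mul_zero, div_zero] at hlamB
    linarith
  have hσA : 0 < σ * Aα := mul_pos hσ hA
  have hratio : 1 ≤ Bα / (σ * Aα * lam) := by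
    rw [le_div_iff₀ (by positivity), one_mul, mul_comm]
    exact (le_div_iff₀ hσA).mp hlamB
  have hB : 0 < Bα := by
    have := lt_of_lt_of_le one_pos hratio
    rwa [div_pos_iff_of_pos_right (by positivity)] at this
  set t := 2 * log (Bα / (σ * Aα * lam))
  have ht : 0 ≤ t := mul_nonneg zero_le_two (log_nonneg hratio)
  have hexp : exp (-(t / 2)) = σ * Aα * lam / Bα := by
    rw [show -(t / 2) = -log (Bα / (σ * Aα * lam)) by ring, exp_neg,
      exp_log (by positivity), inv_div]
  subst hRlam
  refine ⟨?_, fun a ha => abs_rpow_div_rpow_le_of_abs_le hα1 hσ ht ha⟩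
  calc _ ≤ exp (-(t / 2)) / (σ * Aα) * Bα :=
        hBα ▸ setIntegral_score_tail_le (by linarith) hσ m hA.le ht
    _ = lam := by
        rw [hexp]
        field_simp
end
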